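/- (Uniform boundedness principle with weakened normality.) Let Y be equipped with a norm ‖·‖ and let Z ⊆ Y₊ be a cone that is a complete metric space in the metric induced by the norm of Y, such that |φ − ψ| ∈ Z for all φ, ψ ∈ Z and ‖φ‖ = ‖|φ|‖ for all φ ∈ Z − Z. Assume only that there exists a constant C > 0 such that ‖φ‖ ≤ C‖ψ‖ whenever φ ≤ ψ (pointwise), φ, ψ ∈ Z. Let 𝒜 be a set of subadditive and monotone mappings A : Z − Z → Y such that AZ ⊆ Z and such that each A ∈ 𝒜 is positively homogeneous on Z and continuous on Z. If for each φ ∈ Z there exists M_φ > 0 such that ‖Aφ‖ ≤ M_φ for all A ∈ 𝒜, then there exists M > 0 such that ‖A‖_LIP ≤ M for all A ∈ 𝒜. -/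

import Mathlib

/-!
Baire's theorem in the complete cone `Z` yields a ball `B(x₀, r) ∩ Z` on which all `A ∈ 𝒜` are
uniformly bounded. For `χ ∈ Z` and small `t > 0`, monotonicity and `x₀ ≥ 0` give
`A (t • χ) ≤ A (x₀ + t • χ)`, so weak normality and positive homogeneity turn that bound into
`‖A χ‖ ≤ K ‖χ‖`. Finally subadditivity and monotonicity give `|A φ - A ψ| ≤ A |φ - ψ|`, and one
more use of weak normality together with `‖χ‖ = ‖|χ|‖` yields the Lipschitz bound `C K`.
-/

open Set Filter Topology

section Seminorm

variable {E : Type*} [AddCommGroup E] [Module ℝ E]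

structure IsSeminormOn (Y : Submodule ℝ E) (nrm : E → ℝ) : Prop where
  add_le : ∀ φ ∈ Y, ∀ ψ ∈ Y, nrm (φ + ψ) ≤ nrm φ + nrm ψ
  smul : ∀ (c : ℝ), ∀ φ ∈ Y, nrm (c • φ) = |c| * nrm φ

namespace IsSeminormOn

variable {Y : Submodule ℝ E} {nrm : E → ℝ}

theorem map_zero (hN : IsSeminormOn Y nrm) : nrm 0 = 0 := by
  simpa using hN.smul 0 0 Y.zero_mem

theorem map_neg (hN : IsSeminormOn Y nrm) {φ : E} (hφ : φ ∈ Y) : nrm (-φ) = nrm φ := by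
  simpa using hN.smul (-1) φ hφ

theorem map_sub_rev (hN : IsSeminormOn Y nrm) {φ ψ : E} (hφ : φ ∈ Y) (hψ : ψ ∈ Y) :
    nrm (φ - ψ) = nrm (ψ - φ) := by
  rw [← neg_sub, hN.map_neg (Y.sub_mem hψ hφ)]

theorem nonneg (hN : IsSeminormOn Y nrm) {φ : E} (hφ : φ ∈ Y) : 0 ≤ nrm φ := by
  have h := hN.add_le φ hφ (-φ) (Y.neg_mem hφ)
  rw [add_neg_cancel, hN.map_zero, hN.map_neg hφ] at h
  linarith

theorem sub_le (hN : IsSeminormOn Y nrm) {φ ψ χ : E} (hφ : φ ∈ Y) (hψ : ψ ∈ Y) (hχ : χ ∈ Y) :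
    nrm (φ - χ) ≤ nrm (φ - ψ) + nrm (ψ - χ) := by
  simpa using hN.add_le _ (Y.sub_mem hφ hψ) _ (Y.sub_mem hψ hχ)

theorem abs_sub_le (hN : IsSeminormOn Y nrm) {φ ψ : E} (hφ : φ ∈ Y) (hψ : ψ ∈ Y) :
    |nrm φ - nrm ψ| ≤ nrm (φ - ψ) := by
  have h₁ := hN.sub_le hφ hψ Y.zero_mem
  have h₂ := hN.sub_le hψ hφ Y.zero_mem
  simp only [sub_zero] at h₁ h₂
  rw [hN.map_sub_rev hψ hφ] at h₂
  exact abs_sub_le_iff.2 ⟨by linarith, by linarith⟩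

end IsSeminormOn

/-- `Z` with the pseudometric `dist φ ψ = nrm (φ - ψ)`, kept apart from the topology that
`Z` inherits from `E`. -/
structure WithNrm (Y : Submodule ℝ E) (nrm : E → ℝ) (Z : Set E) where
  val : E
  mem : val ∈ Z

namespace WithNrm

variable {Y : Submodule ℝ E} {nrm : E → ℝ} {Z : Set E}
  [hN : Fact (IsSeminormOn Y nrm)] [hZY : Fact (Z ⊆ Y)]

noncomputable instance : PseudoMetricSpace (WithNrm Y nrm Z) where
  dist x y := nrm (x.val - y.val)
  dist_self x := by simpa using hN.out.map_zero
  dist_comm x y := hN.out.map_sub_rev (hZY.out x.mem) (hZY.out y.mem)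
  dist_triangle x y z := hN.out.sub_le (hZY.out x.mem) (hZY.out y.mem) (hZY.out z.mem)

theorem completeSpace
    (hZcomplete : ∀ u : ℕ → E, (∀ n, u n ∈ Z) →
      (∀ ε : ℝ, 0 < ε → ∃ N : ℕ, ∀ m ≥ N, ∀ n ≥ N, nrm (u m - u n) < ε) →
      ∃ φ ∈ Z, ∀ ε : ℝ, 0 < ε → ∃ N : ℕ, ∀ n ≥ N, nrm (u n - φ) < ε) :
    CompleteSpace (WithNrm Y nrm Z) := by
  refine Metric.complete_of_cauchySeq_tendsto fun u hu => ?_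
  obtain ⟨φ, hφ, hlim⟩ :=
    hZcomplete (fun n => (u n).val) (fun n => (u n).mem) (Metric.cauchySeq_iff.1 hu)
  exact ⟨⟨φ, hφ⟩, Metric.tendsto_atTop.2 hlim⟩

theorem continuous_nrm_comp {f : E → E} (hfY : ∀ φ ∈ Z, f φ ∈ Y)
    (hf : ∀ φ ∈ Z, ∀ ε : ℝ, 0 < ε → ∃ δ : ℝ, 0 < δ ∧
      ∀ ψ ∈ Z, nrm (ψ - φ) < δ → nrm (f ψ - f φ) < ε) :
    Continuous fun x : WithNrm Y nrm Z => nrm (f x.val) := by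
  refine Metric.continuous_iff.2 fun x ε hε => ?_
  obtain ⟨δ, hδ, hfδ⟩ := hf x.val x.mem ε hε
  refine ⟨δ, hδ, fun y hy => ?_⟩
  rw [Real.dist_eq]
  exact (hN.out.abs_sub_le (hfY _ y.mem) (hfY _ x.mem)).trans_lt (hfδ y.val y.mem hy)

end WithNrm

end Seminorm

theorem exists_isOpen_forall_le_of_forall_exists_le {X ι : Type*} [TopologicalSpace X]
    [BaireSpace X] [Nonempty X] {s : Set ι} {f : ι → X → ℝ} (hf : ∀ i ∈ s, Continuous (f i))
    (hbdd : ∀ x, ∃ c, ∀ i ∈ s, f i x ≤ c) :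
    ∃ U : Set X, IsOpen U ∧ U.Nonempty ∧ ∃ c : ℝ, ∀ i ∈ s, ∀ x ∈ U, f i x ≤ c := by
  let F : ℕ → Set X := fun n => {x | ∀ i ∈ s, f i x ≤ n}
  have hF : ∀ n, IsClosed (F n) := fun n => by
    simp only [F, ofPred_forall]
    exact isClosed_biInter fun i hi => isClosed_le (hf i hi) continuous_const
  have hcover : ⋃ n, F n = univ := by
    refine eq_univ_of_forall fun x => mem_iUnion.2 ?_
    obtain ⟨c, hc⟩ := hbdd x
    obtain ⟨n, hn⟩ := exists_nat_ge c
    exact ⟨n, fun i hi => (hc i hi).trans hn⟩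
  obtain ⟨n, hn⟩ := nonempty_interior_of_iUnion_of_closed hF hcover
  exact ⟨_, isOpen_interior, hn, n, fun i hi x hx => interior_subset hx i hi⟩

theorem abs_sub_map_le_map_abs_sub {E F : Type*} [AddCommGroup E] [Lattice E]
    [IsOrderedAddMonoid E] [AddCommGroup F] [Lattice F] [IsOrderedAddMonoid F]
    {S : Set E} {A : E → F}
    (hadd : ∀ φ ∈ S, ∀ ψ ∈ S, φ + ψ ∈ S) (hsub : ∀ φ ∈ S, ∀ ψ ∈ S, A (φ + ψ) ≤ A φ + A ψ)
    (hmono : MonotoneOn A S) {φ ψ : E} (hφ : φ ∈ S) (hψ : ψ ∈ S) (habs : |φ - ψ| ∈ S) :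
    |A φ - A ψ| ≤ A |φ - ψ| := by
  have hφle : φ ≤ ψ + |φ - ψ| := sub_le_iff_le_add'.1 (le_abs_self _)
  have hψle : ψ ≤ φ + |φ - ψ| := sub_le_iff_le_add'.1 (abs_sub_comm φ ψ ▸ le_abs_self _)
  have h₁ := (hmono hφ (hadd ψ hψ _ habs) hφle).trans (hsub ψ hψ _ habs)
  have h₂ := (hmono hψ (hadd φ hφ _ habs) hψle).trans (hsub φ hφ _ habs)
  rw [abs_le', neg_sub]
  exact ⟨sub_le_iff_le_add'.2 h₁, sub_le_iff_le_add'.2 h₂⟩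

section OrderedSpace

variable {E : Type*} [AddCommGroup E] [PartialOrder E] [IsOrderedAddMonoid E] [Module ℝ E]
  {Y : Submodule ℝ E} {nrm : E → ℝ} {Z : Set E} {C : ℝ}

/-- Scaling `χ` by `t = r / s` with `s > nrm χ` puts `x₀ + t • χ` in the ball; the bound
`C * c * s / r` obtained this way is then pushed to `s → nrm χ`. -/
theorem IsSeminormOn.map_le_of_forall_ball_le (hN : IsSeminormOn Y nrm) (hZY : Z ⊆ Y)
    (hZnonneg : ∀ φ ∈ Z, 0 ≤ φ) (hZadd : ∀ φ ∈ Z, ∀ ψ ∈ Z, φ + ψ ∈ Z)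
    (hZsmul : ∀ t : ℝ, 0 ≤ t → ∀ φ ∈ Z, t • φ ∈ Z) (hC : 0 ≤ C)
    (hnormal : ∀ φ ∈ Z, ∀ ψ ∈ Z, φ ≤ ψ → nrm φ ≤ C * nrm ψ)
    {A : E → E} (hAZ : MapsTo A Z Z) (hmono : MonotoneOn A Z)
    (hhom : ∀ t : ℝ, 0 ≤ t → ∀ φ ∈ Z, A (t • φ) = t • A φ)
    {x₀ : E} (hx₀ : x₀ ∈ Z) {r c : ℝ} (hr : 0 < r)
    (hbound : ∀ ψ ∈ Z, nrm (ψ - x₀) < r → nrm (A ψ) ≤ c) {χ : E} (hχ : χ ∈ Z) :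
    nrm (A χ) ≤ C * c / r * nrm χ := by
  have hscaled : ∀ s, nrm χ < s → nrm (A χ) ≤ C * c / r * s := by
    intro s hs
    have hs₀ : 0 < s := (hN.nonneg (hZY hχ)).trans_lt hs
    have ht : 0 < r / s := div_pos hr hs₀
    have htχ : (r / s) • χ ∈ Z := hZsmul _ ht.le χ hχ
    have hψ : x₀ + (r / s) • χ ∈ Z := hZadd x₀ hx₀ _ htχ
    have hclose : nrm (x₀ + (r / s) • χ - x₀) < r := by
      rw [add_sub_cancel_left, hN.smul _ χ (hZY hχ), abs_of_pos ht]
      calc r / s * nrm χ < r / s * s := mul_lt_mul_of_pos_left hs ht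
        _ = r := div_mul_cancel₀ r hs₀.ne'
    have hmul : r / s * nrm (A χ) ≤ C * c :=
      calc r / s * nrm (A χ) = nrm (A ((r / s) • χ)) := by
            rw [hhom _ ht.le χ hχ, hN.smul _ _ (hZY (hAZ hχ)), abs_of_pos ht]
        _ ≤ C * nrm (A (x₀ + (r / s) • χ)) :=
            hnormal _ (hAZ htχ) _ (hAZ hψ)
              (hmono htχ hψ (le_add_of_nonneg_left (hZnonneg x₀ hx₀)))
        _ ≤ C * c := mul_le_mul_of_nonneg_left (hbound _ hψ hclose) hC
    rw [div_mul_eq_mul_div, le_div_iff₀ hr]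
    rw [div_mul_eq_mul_div, div_le_iff₀ hs₀] at hmul
    linarith
  have hlim : Tendsto (fun s => C * c / r * s) (𝓝[>] (nrm χ)) (𝓝 (C * c / r * nrm χ)) :=
    ((continuous_const_mul _).tendsto _).mono_left nhdsWithin_le_nhds
  exact ge_of_tendsto hlim (eventually_nhdsWithin_of_forall hscaled)

theorem IsSeminormOn.exists_forall_map_le_mul (hN : IsSeminormOn Y nrm) (hZY : Z ⊆ Y)
    (hZnonneg : ∀ φ ∈ Z, 0 ≤ φ) (hZadd : ∀ φ ∈ Z, ∀ ψ ∈ Z, φ + ψ ∈ Z)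
    (hZsmul : ∀ t : ℝ, 0 ≤ t → ∀ φ ∈ Z, t • φ ∈ Z)
    (hZcomplete : ∀ u : ℕ → E, (∀ n, u n ∈ Z) →
      (∀ ε : ℝ, 0 < ε → ∃ N : ℕ, ∀ m ≥ N, ∀ n ≥ N, nrm (u m - u n) < ε) →
      ∃ φ ∈ Z, ∀ ε : ℝ, 0 < ε → ∃ N : ℕ, ∀ n ≥ N, nrm (u n - φ) < ε)
    (hC : 0 ≤ C) (hnormal : ∀ φ ∈ Z, ∀ ψ ∈ Z, φ ≤ ψ → nrm φ ≤ C * nrm ψ)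
    {𝒜 : Set (E → E)} (hAZ : ∀ A ∈ 𝒜, MapsTo A Z Z) (hmono : ∀ A ∈ 𝒜, MonotoneOn A Z)
    (hhom : ∀ A ∈ 𝒜, ∀ t : ℝ, 0 ≤ t → ∀ φ ∈ Z, A (t • φ) = t • A φ)
    (hcont : ∀ A ∈ 𝒜, ∀ φ ∈ Z, ∀ ε : ℝ, 0 < ε → ∃ δ : ℝ, 0 < δ ∧
      ∀ ψ ∈ Z, nrm (ψ - φ) < δ → nrm (A ψ - A φ) < ε)
    (hbdd : ∀ φ ∈ Z, ∃ c, ∀ A ∈ 𝒜, nrm (A φ) ≤ c) :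
    ∃ K, 0 < K ∧ ∀ A ∈ 𝒜, ∀ χ ∈ Z, nrm (A χ) ≤ K * nrm χ := by
  rcases Z.eq_empty_or_nonempty with rfl | ⟨ζ, hζ⟩
  · exact ⟨1, one_pos, fun _ _ _ h => h.elim⟩
  have : Fact (IsSeminormOn Y nrm) := ⟨hN⟩
  have : Fact (Z ⊆ Y) := ⟨hZY⟩
  have := WithNrm.completeSpace (Y := Y) hZcomplete
  have : Nonempty (WithNrm Y nrm Z) := ⟨⟨ζ, hζ⟩⟩
  obtain ⟨U, hU, ⟨x₀, hx₀⟩, c, hc⟩ :=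
    exists_isOpen_forall_le_of_forall_exists_le (s := 𝒜)
      (f := fun A (x : WithNrm Y nrm Z) => nrm (A x.val))
      (fun A hA => WithNrm.continuous_nrm_comp (fun _ hφ => hZY (hAZ A hA hφ)) (hcont A hA))
      (fun x => hbdd x.val x.mem)
  obtain ⟨r, hr, hball⟩ := Metric.isOpen_iff.1 hU x₀ hx₀
  refine ⟨max (C * c / r) 1, one_pos.trans_le (le_max_right _ _), fun A hA χ hχ => ?_⟩
  refine (hN.map_le_of_forall_ball_le hZY hZnonneg hZadd hZsmul hC hnormal (hAZ A hA)
    (hmono A hA) (hhom A hA) x₀.mem hr (fun ψ hψ hd => hc A hA ⟨ψ, hψ⟩ (hball hd)) hχ).trans ?_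
  exact mul_le_mul_of_nonneg_right (le_max_left _ _) (hN.nonneg (hZY hχ))

end OrderedSpace

theorem uniform_boundedness_principle_weak_normality_general
    {Ω : Type*}
    (Y : Submodule ℝ (Ω → ℝ))
    -- the norm on `Y`
    (nrm : (Ω → ℝ) → ℝ)
    (hnrm_add : ∀ φ ∈ Y, ∀ ψ ∈ Y, nrm (φ + ψ) ≤ nrm φ + nrm ψ)
    (hnrm_smul : ∀ (c : ℝ), ∀ φ ∈ Y, nrm (c • φ) = |c| * nrm φ)
    -- `Z ⊆ Y₊` is a cone
    (Z : Set (Ω → ℝ))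
    (hZY : ∀ φ ∈ Z, φ ∈ Y ∧ 0 ≤ φ)
    -- weakened normality: only `‖φ‖ ≤ C ‖ψ‖` whenever `φ ≤ ψ` (pointwise), `φ, ψ ∈ Z`
    (C : ℝ) (hC : 0 < C)
    (hnormalZ : ∀ φ ∈ Z, ∀ ψ ∈ Z, φ ≤ ψ → nrm φ ≤ C * nrm ψ)
    (hZadd : ∀ φ ∈ Z, ∀ ψ ∈ Z, φ + ψ ∈ Z)
    (hZsmul : ∀ t : ℝ, 0 ≤ t → ∀ φ ∈ Z, t • φ ∈ Z)
    (hZabs : ∀ φ ∈ Z, ∀ ψ ∈ Z, |φ - ψ| ∈ Z)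
    -- `‖φ‖ = ‖|φ|‖` for all `φ ∈ Z - Z`
    (hZnrmabs : ∀ χ, (∃ φ ∈ Z, ∃ ψ ∈ Z, χ = φ - ψ) → nrm χ = nrm |χ|)
    -- `Z` is a complete metric space in the metric induced by the norm of `Y`
    (hZcomplete : ∀ u : ℕ → (Ω → ℝ), (∀ n, u n ∈ Z) →
      (∀ ε : ℝ, 0 < ε → ∃ N : ℕ, ∀ m ≥ N, ∀ n ≥ N, nrm (u m - u n) < ε) →
      ∃ φ ∈ Z, ∀ ε : ℝ, 0 < ε → ∃ N : ℕ, ∀ n ≥ N, nrm (u n - φ) < ε)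
    -- `𝒜` is a set of mappings `A : Z - Z → Y`, each subadditive, monotone, with `AZ ⊆ Z`,
    -- positively homogeneous on `Z` and continuous on `Z`
    (𝒜 : Set ((Ω → ℝ) → (Ω → ℝ)))
    (hsub : ∀ A ∈ 𝒜, ∀ χ₁ χ₂, (∃ φ ∈ Z, ∃ ψ ∈ Z, χ₁ = φ - ψ) →
      (∃ φ ∈ Z, ∃ ψ ∈ Z, χ₂ = φ - ψ) → A (χ₁ + χ₂) ≤ A χ₁ + A χ₂)
    (hmono : ∀ A ∈ 𝒜, ∀ χ₁ χ₂, (∃ φ ∈ Z, ∃ ψ ∈ Z, χ₁ = φ - ψ) →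
      (∃ φ ∈ Z, ∃ ψ ∈ Z, χ₂ = φ - ψ) → χ₁ ≤ χ₂ → A χ₁ ≤ A χ₂)
    (hAZ : ∀ A ∈ 𝒜, ∀ φ ∈ Z, A φ ∈ Z)
    (hhom : ∀ A ∈ 𝒜, ∀ t : ℝ, 0 ≤ t → ∀ φ ∈ Z, A (t • φ) = t • A φ)
    (hcont : ∀ A ∈ 𝒜, ∀ φ ∈ Z, ∀ ε : ℝ, 0 < ε → ∃ δ : ℝ, 0 < δ ∧
      ∀ ψ ∈ Z, nrm (ψ - φ) < δ → nrm (A ψ - A φ) < ε)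
    -- pointwise boundedness of `𝒜`
    (hptwise : ∀ φ ∈ Z, ∃ Mφ : ℝ, 0 < Mφ ∧ ∀ A ∈ 𝒜, nrm (A φ) ≤ Mφ) :
    ∃ M : ℝ, 0 < M ∧ ∀ A ∈ 𝒜, ∀ φ ∈ Z, ∀ ψ ∈ Z, nrm (A φ - A ψ) ≤ M * nrm (φ - ψ) := by
  have hZdiff : ∀ φ ∈ Z, ∃ a ∈ Z, ∃ b ∈ Z, φ = a - b :=
    fun φ hφ => ⟨φ + φ, hZadd φ hφ φ hφ, φ, hφ, (add_sub_cancel_right φ φ).symm⟩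
  have hmonoZ : ∀ A ∈ 𝒜, MonotoneOn A Z :=
    fun A hA φ hφ ψ hψ => hmono A hA φ ψ (hZdiff φ hφ) (hZdiff ψ hψ)
  have hsubZ : ∀ A ∈ 𝒜, ∀ φ ∈ Z, ∀ ψ ∈ Z, A (φ + ψ) ≤ A φ + A ψ :=
    fun A hA φ hφ ψ hψ => hsub A hA φ ψ (hZdiff φ hφ) (hZdiff ψ hψ)
  obtain ⟨K, hK, hAK⟩ := IsSeminormOn.exists_forall_map_le_mul ⟨hnrm_add, hnrm_smul⟩
    (fun φ hφ => (hZY φ hφ).1) (fun φ hφ => (hZY φ hφ).2) hZadd hZsmul hZcomplete hC.le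
    hnormalZ (fun A hA φ hφ => hAZ A hA φ hφ) hmonoZ hhom hcont
    (fun φ hφ => (hptwise φ hφ).imp fun _ h => h.2)
  refine ⟨C * K, by positivity, fun A hA φ hφ ψ hψ => ?_⟩
  have hAφ := hAZ A hA φ hφ
  have hAψ := hAZ A hA ψ hψ
  have habs := hZabs φ hφ ψ hψ
  calc nrm (A φ - A ψ) = nrm |A φ - A ψ| := hZnrmabs _ ⟨_, hAφ, _, hAψ, rfl⟩
    _ ≤ C * nrm (A |φ - ψ|) :=
        hnormalZ _ (hZabs _ hAφ _ hAψ) _ (hAZ A hA _ habs)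
          (abs_sub_map_le_map_abs_sub hZadd (hsubZ A hA) (hmonoZ A hA) hφ hψ habs)
    _ ≤ C * (K * nrm |φ - ψ|) := by gcongr; exact hAK A hA _ habs
    _ = C * K * nrm (φ - ψ) := by rw [← hZnrmabs _ ⟨φ, hφ, ψ, hψ, rfl⟩]; ring

/-- Uniform boundedness principle with weakened normality: Let `Y ⊆ Ω → ℝ` be a linear subspace equipped
with a norm `nrm` whose positive cone is normal with constant `C > 0`, and let `Z ⊆ Y₊` be a cone
which is complete in the metric induced by the norm, with `|φ - ψ| ∈ Z` for `φ, ψ ∈ Z` and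
`‖φ‖ = ‖|φ|‖` for `φ ∈ Z - Z`.  Let `𝒜` be a set of subadditive, monotone mappings
`A : Z - Z → Y` with `AZ ⊆ Z`, each positively homogeneous and continuous on `Z`.  If for each
`φ ∈ Z` there is `M_φ > 0` with `‖Aφ‖ ≤ M_φ` for all `A ∈ 𝒜`, then there is `M > 0` with
`‖A‖_LIP ≤ M` for all `A ∈ 𝒜`, i.e. `‖Aφ - Aψ‖ ≤ M * ‖φ - ψ‖` for all `φ, ψ ∈ Z`, `A ∈ 𝒜`. -/
theorem uniform_boundedness_principle_weak_normality
    {Ω : Type*} [Nonempty Ω]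
    (Y : Submodule ℝ (Ω → ℝ))
    -- the norm on `Y`
    (nrm : (Ω → ℝ) → ℝ)
    (hnrm_nonneg : ∀ φ ∈ Y, 0 ≤ nrm φ)
    (hnrm_zero : ∀ φ ∈ Y, (nrm φ = 0 ↔ φ = 0))
    (hnrm_add : ∀ φ ∈ Y, ∀ ψ ∈ Y, nrm (φ + ψ) ≤ nrm φ + nrm ψ)
    (hnrm_smul : ∀ (c : ℝ), ∀ φ ∈ Y, nrm (c • φ) = |c| * nrm φ)
    -- `Z ⊆ Y₊` is a cone
    (Z : Set (Ω → ℝ))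
    (hZY : ∀ φ ∈ Z, φ ∈ Y ∧ 0 ≤ φ)
    -- weakened normality: only `‖φ‖ ≤ C ‖ψ‖` whenever `φ ≤ ψ` (pointwise), `φ, ψ ∈ Z`
    (C : ℝ) (hC : 0 < C)
    (hnormalZ : ∀ φ ∈ Z, ∀ ψ ∈ Z, φ ≤ ψ → nrm φ ≤ C * nrm ψ)
    (hZadd : ∀ φ ∈ Z, ∀ ψ ∈ Z, φ + ψ ∈ Z)
    (hZsmul : ∀ t : ℝ, 0 ≤ t → ∀ φ ∈ Z, t • φ ∈ Z)
    (hZabs : ∀ φ ∈ Z, ∀ ψ ∈ Z, |φ - ψ| ∈ Z)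
    -- `‖φ‖ = ‖|φ|‖` for all `φ ∈ Z - Z`
    (hZnrmabs : ∀ χ, (∃ φ ∈ Z, ∃ ψ ∈ Z, χ = φ - ψ) → nrm χ = nrm |χ|)
    -- `Z` is a complete metric space in the metric induced by the norm of `Y`
    (hZcomplete : ∀ u : ℕ → (Ω → ℝ), (∀ n, u n ∈ Z) →
      (∀ ε : ℝ, 0 < ε → ∃ N : ℕ, ∀ m ≥ N, ∀ n ≥ N, nrm (u m - u n) < ε) →
      ∃ φ ∈ Z, ∀ ε : ℝ, 0 < ε → ∃ N : ℕ, ∀ n ≥ N, nrm (u n - φ) < ε)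
    -- `𝒜` is a set of mappings `A : Z - Z → Y`, each subadditive, monotone, with `AZ ⊆ Z`,
    -- positively homogeneous on `Z` and continuous on `Z`
    (𝒜 : Set ((Ω → ℝ) → (Ω → ℝ)))
    (hAY : ∀ A ∈ 𝒜, ∀ χ, (∃ φ ∈ Z, ∃ ψ ∈ Z, χ = φ - ψ) → A χ ∈ Y)
    (hsub : ∀ A ∈ 𝒜, ∀ χ₁ χ₂, (∃ φ ∈ Z, ∃ ψ ∈ Z, χ₁ = φ - ψ) →
      (∃ φ ∈ Z, ∃ ψ ∈ Z, χ₂ = φ - ψ) → A (χ₁ + χ₂) ≤ A χ₁ + A χ₂)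
    (hmono : ∀ A ∈ 𝒜, ∀ χ₁ χ₂, (∃ φ ∈ Z, ∃ ψ ∈ Z, χ₁ = φ - ψ) →
      (∃ φ ∈ Z, ∃ ψ ∈ Z, χ₂ = φ - ψ) → χ₁ ≤ χ₂ → A χ₁ ≤ A χ₂)
    (hAZ : ∀ A ∈ 𝒜, ∀ φ ∈ Z, A φ ∈ Z)
    (hhom : ∀ A ∈ 𝒜, ∀ t : ℝ, 0 ≤ t → ∀ φ ∈ Z, A (t • φ) = t • A φ)
    (hcont : ∀ A ∈ 𝒜, ∀ φ ∈ Z, ∀ ε : ℝ, 0 < ε → ∃ δ : ℝ, 0 < δ ∧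
      ∀ ψ ∈ Z, nrm (ψ - φ) < δ → nrm (A ψ - A φ) < ε)
    -- pointwise boundedness of `𝒜`
    (hptwise : ∀ φ ∈ Z, ∃ Mφ : ℝ, 0 < Mφ ∧ ∀ A ∈ 𝒜, nrm (A φ) ≤ Mφ) :
    ∃ M : ℝ, 0 < M ∧ ∀ A ∈ 𝒜, ∀ φ ∈ Z, ∀ ψ ∈ Z, nrm (A φ - A ψ) ≤ M * nrm (φ - ψ) :=
  uniform_boundedness_principle_weak_normality_general Y nrm hnrm_add hnrm_smul Z hZY C hC hnormalZ
    hZadd hZsmul hZabs hZnrmabs hZcomplete 𝒜 hsub hmono hAZ hhom hcont hptwise
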